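/- arXiv:2205.01562 — 9 statements merged into one kernel-verified Lean document; each statement's English description precedes it below -/
import Mathlib

section
/- (Schur complement transitivity.) Let F₁, F₂, C be finite types and let L be a square real matrix indexed by F₁ ⊕ F₂ ⊕ C, with 3×3 block decomposition whose blocks (rows and columns grouped as F₁, F₂, C) are A, B, C'; D, E, F'; G, H, K. Assume A is invertible and the 2×2 block matrix M := Matrix.fromBlocks A B D E (indexed by F₁ ⊕ F₂) is invertible. Then E − D * A⁻¹ * B is invertible, and K − (Matrix.of ![G, H] as a row of blocks) * M⁻¹ * (the column of blocks C', F') equals (K − G * A⁻¹ * C') − (H − G * A⁻¹ * B) * (E − D * A⁻¹ * B)⁻¹ * (F' − D * A⁻¹ * C'). In other words, sc(sc(L, F₂ ⊕ C), C) = sc(L, C): first eliminating F₁ and then eliminating F₂ gives the same Schur complement onto C as eliminating F₁ ⊕ F₂ at once. -/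
open Matrix

/-- Schur complement transitivity: eliminating `F₁` first and then `F₂` gives the same
Schur complement onto `C` as eliminating `F₁ ⊕ F₂` at once. -/
theorem schur_complement_transitivity
    {F₁ F₂ C : Type*} [Fintype F₁] [Fintype F₂] [Fintype C]
    [DecidableEq F₁] [DecidableEq F₂] [DecidableEq C]
    (A : Matrix F₁ F₁ ℝ) (B : Matrix F₁ F₂ ℝ) (C' : Matrix F₁ C ℝ)
    (D : Matrix F₂ F₁ ℝ) (E : Matrix F₂ F₂ ℝ) (F' : Matrix F₂ C ℝ)
    (G : Matrix C F₁ ℝ) (H : Matrix C F₂ ℝ) (K : Matrix C C ℝ)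
    (hA : IsUnit A.det) (hM : IsUnit (Matrix.fromBlocks A B D E).det) :
    IsUnit (E - D * A⁻¹ * B).det ∧
      K - Matrix.fromCols G H * (Matrix.fromBlocks A B D E)⁻¹ * Matrix.fromRows C' F' =
        (K - G * A⁻¹ * C') -
          (H - G * A⁻¹ * B) * (E - D * A⁻¹ * B)⁻¹ * (F' - D * A⁻¹ * C') := by
  letI iA : Invertible A := A.invertibleOfIsUnitDet hA
  letI iM : Invertible (Matrix.fromBlocks A B D E) :=
    ((Matrix.isUnit_iff_isUnit_det _).2 hM).invertible
  letI iS : Invertible (E - D * ⅟A * B) := Matrix.invertibleOfFromBlocks₁₁Invertible A B D E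
  have hAi : ⅟A = A⁻¹ := (invOf_eq_nonsing_inv A).symm ▸ rfl
  have hS : IsUnit (E - D * A⁻¹ * B).det := by
    rw [← hAi]; exact (isUnit_nonsing_inv_det_iff.mp (isUnit_nonsing_inv_det _ ((E - D * ⅟A * B).isUnit_iff_isUnit_det.mp (isUnit_of_invertible _))))
  refine ⟨hS, ?_⟩
  letI iS' : Invertible (E - D * A⁻¹ * B) := (E - D * A⁻¹ * B).invertibleOfIsUnitDet hS
  have hSi : ⅟(E - D * ⅟A * B) = (E - D * A⁻¹ * B)⁻¹ := by
    rw [invOf_eq_nonsing_inv, hAi]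
  have hMi : (Matrix.fromBlocks A B D E)⁻¹ = ⅟(Matrix.fromBlocks A B D E) :=
    (invOf_eq_nonsing_inv _).symm
  rw [hMi, Matrix.invOf_fromBlocks₁₁_eq, hSi, hAi,
    Matrix.fromCols_mul_fromBlocks, Matrix.fromCols_mul_fromRows]
  simp only [Matrix.add_mul, Matrix.mul_add, Matrix.sub_mul, Matrix.mul_sub,
    Matrix.neg_mul, Matrix.mul_neg, Matrix.mul_assoc]
  abel
end

section
/- (Schur complement decomposition.) Let F₁, F₂, C be finite types and let L₁, L₂ be square real matrices indexed by (F₁ ⊕ F₂) ⊕ C. Suppose every row and every column of L₁ indexed by an element of F₂ is zero, and every row and every column of L₂ indexed by an element of F₁ is zero. Let L := L₁ + L₂, and suppose the blocks (L₁)_{F₁,F₁} and (L₂)_{F₂,F₂} are invertible. Then the block L_{F₁⊕F₂, F₁⊕F₂} is invertible, and sc(L, C) = S₁ + S₂, where S₁ := (L₁)_{C,C} − (L₁)_{C,F₁} * ((L₁)_{F₁,F₁})⁻¹ * (L₁)_{F₁,C} and S₂ := (L₂)_{C,C} − (L₂)_{C,F₂} * ((L₂)_{F₂,F₂})⁻¹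 * (L₂)_{F₂,C}. -/
open Matrix

/-- Schur complement decomposition: if `L = L₁ + L₂` where `L₁` vanishes on all rows and
columns indexed by `F₂` and `L₂` vanishes on all rows and columns indexed by `F₁`, and the
relevant diagonal blocks are invertible, then `sc(L, C) = sc(L₁, C) + sc(L₂, C)` where the
Schur complements of `L₁, L₂` only eliminate `F₁, F₂` respectively. -/
theorem schur_complement_decomposition
    {F₁ F₂ C : Type*} [Fintype F₁] [Fintype F₂] [Fintype C]
    [DecidableEq F₁] [DecidableEq F₂] [DecidableEq C]
    (L₁ L₂ : Matrix ((F₁ ⊕ F₂) ⊕ C) ((F₁ ⊕ F₂) ⊕ C) ℝ)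
    (h₁row : ∀ (i : F₂) j, L₁ (Sum.inl (Sum.inr i)) j = 0)
    (h₁col : ∀ (i : F₂) j, L₁ j (Sum.inl (Sum.inr i)) = 0)
    (h₂row : ∀ (i : F₁) j, L₂ (Sum.inl (Sum.inl i)) j = 0)
    (h₂col : ∀ (i : F₁) j, L₂ j (Sum.inl (Sum.inl i)) = 0)
    (h₁ : IsUnit (L₁.submatrix (Sum.inl ∘ Sum.inl) (Sum.inl ∘ Sum.inl)).det)
    (h₂ : IsUnit (L₂.submatrix (Sum.inl ∘ Sum.inr) (Sum.inl ∘ Sum.inr)).det) :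
    IsUnit ((L₁ + L₂).toBlocks₁₁).det ∧
      (L₁ + L₂).toBlocks₂₂ -
          (L₁ + L₂).toBlocks₂₁ * ((L₁ + L₂).toBlocks₁₁)⁻¹ * (L₁ + L₂).toBlocks₁₂ =
        (L₁.submatrix Sum.inr Sum.inr -
            L₁.submatrix Sum.inr (Sum.inl ∘ Sum.inl) *
              (L₁.submatrix (Sum.inl ∘ Sum.inl) (Sum.inl ∘ Sum.inl))⁻¹ *
              L₁.submatrix (Sum.inl ∘ Sum.inl) Sum.inr) +
          (L₂.submatrix Sum.inr Sum.inr -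
            L₂.submatrix Sum.inr (Sum.inl ∘ Sum.inr) *
              (L₂.submatrix (Sum.inl ∘ Sum.inr) (Sum.inl ∘ Sum.inr))⁻¹ *
              L₂.submatrix (Sum.inl ∘ Sum.inr) Sum.inr) := by
  set A := L₁.submatrix (Sum.inl ∘ Sum.inl) (Sum.inl ∘ Sum.inl) with hA
  set D := L₂.submatrix (Sum.inl ∘ Sum.inr) (Sum.inl ∘ Sum.inr) with hD
  have hM : (L₁ + L₂).toBlocks₁₁ = fromBlocks A 0 0 D := by
    ext (i | i) (j | j) <;>
      simp [toBlocks₁₁, fromBlocks, hA, hD, h₁row, h₁col, h₂row, h₂col]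
  have hdet : IsUnit ((L₁ + L₂).toBlocks₁₁).det := by
    rw [hM, det_fromBlocks_zero₁₂]
    exact h₁.mul h₂
  refine ⟨hdet, ?_⟩
  have hinv : ((L₁ + L₂).toBlocks₁₁)⁻¹ = fromBlocks A⁻¹ 0 0 D⁻¹ := by
    apply inv_eq_right_inv
    rw [hM, fromBlocks_multiply]
    simp [mul_nonsing_inv _ h₁, mul_nonsing_inv _ h₂, fromBlocks_one]
  have h21 : (L₁ + L₂).toBlocks₂₁ =
      fromCols (L₁.submatrix Sum.inr (Sum.inl ∘ Sum.inl))
        (L₂.submatrix Sum.inr (Sum.inl ∘ Sum.inr)) := by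
    ext i (j | j) <;> simp [toBlocks₂₁, h₁col, h₂col]
  have h12 : (L₁ + L₂).toBlocks₁₂ =
      fromRows (L₁.submatrix (Sum.inl ∘ Sum.inl) Sum.inr)
        (L₂.submatrix (Sum.inl ∘ Sum.inr) Sum.inr) := by
    ext (i | i) j <;> simp [toBlocks₁₂, h₁row, h₂row]
  have h22 : (L₁ + L₂).toBlocks₂₂ =
      L₁.submatrix Sum.inr Sum.inr + L₂.submatrix Sum.inr Sum.inr := by
    ext i j; simp [toBlocks₂₂]
  rw [hinv, h21, h12, h22, fromCols_mul_fromBlocks, fromCols_mul_fromRows]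
  simp only [Matrix.mul_zero, Matrix.zero_mul, add_zero, zero_add]
  abel
end

section
/- (Schur complement of a Laplacian is a Laplacian: symmetry and zero row sums are preserved.) Let F and C be finite types and let L be a symmetric real matrix indexed by F ⊕ C such that L *ᵥ (fun _ => 1) = 0 (each row of L sums to zero) and the block L_FF is invertible. Then the Schur complement sc(L,C) := L_CC − L_CF * L_FF⁻¹ * L_FC is symmetric and satisfies sc(L,C) *ᵥ (fun _ => 1) = 0. -/
open Matrix

/-- The Schur complement of a Laplacian is a Laplacian: if `L` is symmetric with zero row
sums and `L_FF` is invertible, then `sc(L,C) = L_CC − L_CF L_FF⁻¹ L_FC` is symmetric and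
has zero row sums. -/
theorem schur_complement_of_laplacian_is_laplacian
    {F C : Type*} [Fintype F] [Fintype C] [DecidableEq F] [DecidableEq C]
    (L : Matrix (F ⊕ C) (F ⊕ C) ℝ)
    (hsymm : L.IsSymm)
    (hrow : L *ᵥ (fun _ => (1 : ℝ)) = 0)
    (hFF : IsUnit (L.toBlocks₁₁).det) :
    (L.toBlocks₂₂ - L.toBlocks₂₁ * (L.toBlocks₁₁)⁻¹ * L.toBlocks₁₂).IsSymm ∧
      (L.toBlocks₂₂ - L.toBlocks₂₁ * (L.toBlocks₁₁)⁻¹ * L.toBlocks₁₂) *ᵥ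
          (fun _ => (1 : ℝ)) = 0 := by
  set A := L.toBlocks₁₁ with hA
  set B := L.toBlocks₁₂ with hB
  set B' := L.toBlocks₂₁ with hB'
  set D := L.toBlocks₂₂ with hD
  -- symmetry of blocks
  have hAT : Aᵀ = A := by
    ext i j
    have := congrFun (congrFun hsymm (Sum.inl j)) (Sum.inl i)
    simpa [Matrix.transpose_apply, hA, Matrix.toBlocks₁₁] using this.symm
  have hBT : Bᵀ = B' := by
    ext i j
    have := congrFun (congrFun hsymm (Sum.inl j)) (Sum.inr i)
    simpa [Matrix.transpose_apply, hB, hB', Matrix.toBlocks₁₂, Matrix.toBlocks₂₁] using this.symm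
  have hB'T : B'ᵀ = B := by
    rw [← hBT, transpose_transpose]
  -- block row sums
  have hrow1 : A *ᵥ (fun _ => (1:ℝ)) + B *ᵥ (fun _ => (1:ℝ)) = 0 := by
    ext f
    have := congrFun hrow (Sum.inl f)
    simpa [Matrix.mulVec, dotProduct, Fintype.sum_sum_type, hA, hB,
      Matrix.toBlocks₁₁, Matrix.toBlocks₁₂] using this
  have hrow2 : B' *ᵥ (fun _ => (1:ℝ)) + D *ᵥ (fun _ => (1:ℝ)) = 0 := by
    ext c
    have := congrFun hrow (Sum.inr c)
    simpa [Matrix.mulVec, dotProduct, Fintype.sum_sum_type, hB', hD,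
      Matrix.toBlocks₂₁, Matrix.toBlocks₂₂] using this
  constructor
  · -- symmetry
    have hDT : Dᵀ = D := by
      ext i j
      have := congrFun (congrFun hsymm (Sum.inr j)) (Sum.inr i)
      simpa [Matrix.transpose_apply, hD, Matrix.toBlocks₂₂] using this.symm
    have hAinvT : (A⁻¹)ᵀ = A⁻¹ := by
      rw [Matrix.transpose_nonsing_inv, hAT]
    show (D - B' * A⁻¹ * B).IsSymm
    unfold Matrix.IsSymm
    rw [transpose_sub, hDT, Matrix.transpose_mul, Matrix.transpose_mul, hBT, hAinvT, hB'T,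
      Matrix.mul_assoc]
  · -- row sums
    have hBv : B *ᵥ (fun _ => (1:ℝ)) = -(A *ᵥ (fun _ => (1:ℝ))) := by
      linear_combination (norm := module) hrow1
    have hDv : D *ᵥ (fun _ => (1:ℝ)) = -(B' *ᵥ (fun _ => (1:ℝ))) := by
      linear_combination (norm := module) hrow2
    rw [Matrix.sub_mulVec, hDv, ← Matrix.mulVec_mulVec, hBv, Matrix.mulVec_neg,
      Matrix.mulVec_mulVec, Matrix.mul_assoc, Matrix.nonsing_inv_mul A hFF,
      Matrix.mul_one]
    simp
end

section
/- (One level of the L⁻¹-approximation theorem.) Let F and C be finite types and let L be a symmetric positive definite real matrix indexed by F ⊕ C. Then the block L_FF is invertible and the Schur complement S := L_CC − L_CF * L_FF⁻¹ * L_FC is symmetric positive definite. Let ε ≥ 0 and let S' be a symmetric positive definite matrix indexed by C with exp(−ε) • S ⪯ S' ⪯ exp(ε) • S. Define M := (Matrix.fromBlocks 1 (−(L_FF⁻¹ * L_FC)) 0 1) * (Matrix.fromBlocks L_FF⁻¹ 0 0 S'⁻¹) * (Matrix.fromBlocks 1 0 (−(L_CF * L_FF⁻¹)) 1). Then exp(−ε)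 • L⁻¹ ⪯ M ⪯ exp(ε) • L⁻¹. -/
open Matrix

section Helpers

variable {m n : Type*} [Fintype m] [Fintype n] [DecidableEq m] [DecidableEq n]

lemma psd_smul {A : Matrix n n ℝ} (hA : A.PosSemidef) {c : ℝ} (hc : 0 ≤ c) :
    (c • A).PosSemidef := by
  refine posSemidef_iff_dotProduct_mulVec.mpr ⟨by rw [Matrix.IsHermitian, conjTranspose_smul, star_trivial, hA.1.eq], fun x => ?_⟩
  rw [smul_mulVec, dotProduct_smul]
  exact mul_nonneg hc (hA.dotProduct_mulVec_nonneg x)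

lemma pd_smul {A : Matrix n n ℝ} (hA : A.PosDef) {c : ℝ} (hc : 0 < c) :
    (c • A).PosDef := by
  refine posDef_iff_dotProduct_mulVec.mpr ⟨by rw [Matrix.IsHermitian, conjTranspose_smul, star_trivial, hA.1.eq], fun x hx => ?_⟩
  rw [smul_mulVec, dotProduct_smul]
  exact mul_pos hc (hA.dotProduct_mulVec_pos hx)

lemma inv_antitone {A B : Matrix n n ℝ} (hA : A.PosDef) (hB : B.PosDef)
    (h : (B - A).PosSemidef) : (A⁻¹ - B⁻¹).PosSemidef := by
  letI := hB.isUnit.invertible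
  letI := hA.inv.isUnit.invertible
  have h' : (B - (1 : Matrix n n ℝ) * (A⁻¹)⁻¹ * (1 : Matrix n n ℝ)ᴴ).PosSemidef := by
    simpa [nonsing_inv_nonsing_inv A (isUnit_iff_isUnit_det A |>.mp hA.isUnit)] using h
  have key := (PosDef.fromBlocks₂₂ B 1 hA.inv).mpr h'
  have := (PosDef.fromBlocks₁₁ (1 : Matrix n n ℝ) A⁻¹ hB).mp (by simpa using key)
  simpa using this

lemma fromBlocks_psd {X : Matrix m m ℝ} {Y : Matrix n n ℝ}
    (hX : X.PosSemidef) (hY : Y.PosSemidef) : (fromBlocks X 0 0 Y).PosSemidef := by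
  rw [posSemidef_iff_dotProduct_mulVec]
  constructor
  · rw [isHermitian_fromBlocks_iff]
    exact ⟨hX.1, by simp, by simp, hY.1⟩
  · intro x
    have : star x ⬝ᵥ (fromBlocks X 0 0 Y) *ᵥ x =
        star (x ∘ Sum.inl) ⬝ᵥ X *ᵥ (x ∘ Sum.inl) + star (x ∘ Sum.inr) ⬝ᵥ Y *ᵥ (x ∘ Sum.inr) := by
      simp [dotProduct, mulVec, Fintype.sum_sum_type, fromBlocks, Finset.mul_sum, Function.comp]
    rw [this]
    exact add_nonneg (hX.dotProduct_mulVec_nonneg _) (hY.dotProduct_mulVec_nonneg _)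

lemma toBlocks11_posDef {L : Matrix (m ⊕ n) (m ⊕ n) ℝ} (hL : L.PosDef) :
    (L.toBlocks₁₁).PosDef := by
  refine posDef_iff_dotProduct_mulVec.mpr ⟨?_, fun x hx => ?_⟩
  · ext i j
    have := congrFun (congrFun hL.1 (Sum.inl i)) (Sum.inl j)
    simpa [toBlocks₁₁, conjTranspose_apply] using this
  · have hx' : (Sum.elim x 0 : m ⊕ n → ℝ) ≠ 0 := by
      intro h
      exact hx (funext fun i => congrFun h (Sum.inl i))
    have := hL.dotProduct_mulVec_pos hx'
    have e : star (Sum.elim x (0 : n → ℝ)) ⬝ᵥ L *ᵥ Sum.elim x 0 =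
        star x ⬝ᵥ L.toBlocks₁₁ *ᵥ x := by
      simp [dotProduct, mulVec, Fintype.sum_sum_type, toBlocks₁₁, Finset.mul_sum]
    rwa [e] at this

lemma toBlocks22_isHermitian {L : Matrix (m ⊕ n) (m ⊕ n) ℝ} (hL : L.IsHermitian) :
    (L.toBlocks₂₂).IsHermitian := by
  ext i j
  have := congrFun (congrFun hL (Sum.inr i)) (Sum.inr j)
  simpa [toBlocks₂₂, conjTranspose_apply] using this

lemma toBlocks21_eq {L : Matrix (m ⊕ n) (m ⊕ n) ℝ} (hL : L.IsHermitian) :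
    L.toBlocks₂₁ = (L.toBlocks₁₂)ᴴ := by
  ext i j
  have := congrFun (congrFun hL (Sum.inr i)) (Sum.inl j)
  simpa [toBlocks₂₁, toBlocks₁₂, conjTranspose_apply] using this.symm

lemma schur_posDef {L : Matrix (m ⊕ n) (m ⊕ n) ℝ} (hL : L.PosDef) :
    (L.toBlocks₂₂ - L.toBlocks₂₁ * (L.toBlocks₁₁)⁻¹ * L.toBlocks₁₂).PosDef := by
  have hA : (L.toBlocks₁₁).PosDef := toBlocks11_posDef hL
  letI := hA.isUnit.invertible
  set A := L.toBlocks₁₁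
  set B := L.toBlocks₁₂
  set D := L.toBlocks₂₂
  have hC : L.toBlocks₂₁ = Bᴴ := toBlocks21_eq hL.1
  have hLblocks : L = fromBlocks A B Bᴴ D := by
    rw [← hC]; exact (fromBlocks_toBlocks L).symm
  rw [hC]
  refine posDef_iff_dotProduct_mulVec.mpr ⟨(toBlocks22_isHermitian hL.1).sub
    (isHermitian_conjTranspose_mul_mul B hA.1.inv), fun y hy => ?_⟩
  set x : m → ℝ := -((A⁻¹ * B) *ᵥ y) with hx_def
  have hv : (Sum.elim x y : m ⊕ n → ℝ) ≠ 0 :=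
    fun h => hy (funext fun i => congrFun h (Sum.inr i))
  have pos := hL.dotProduct_mulVec_pos hv
  rw [hLblocks, dotProduct_mulVec] at pos
  have key := schur_complement_eq₁₁ (A := A) B D x y hA.1
  have hx0 : x + (A⁻¹ * B) *ᵥ y = 0 := by simp [hx_def]
  rw [key, hx0] at pos
  simpa [dotProduct_mulVec] using pos

end Helpers

/-- One level of the `L⁻¹`-approximation theorem: for positive definite `L` indexed by
`F ⊕ C`, the block `L_FF` is invertible, the Schur complement `S` onto `C` is positive
definite, and replacing `S` in the inverted block Cholesky decomposition of `L⁻¹` by an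
`ε`-spectral approximation `S'` yields an `ε`-spectral approximation of `L⁻¹`. -/
theorem approx_schur_gives_approx_inverse
    {F C : Type*} [Fintype F] [Fintype C] [DecidableEq F] [DecidableEq C]
    (L : Matrix (F ⊕ C) (F ⊕ C) ℝ) (hL : L.PosDef)
    (ε : ℝ) (hε : 0 ≤ ε) (S' : Matrix C C ℝ) (hS' : S'.PosDef)
    (h₁ : (S' - Real.exp (-ε) •
      (L.toBlocks₂₂ - L.toBlocks₂₁ * (L.toBlocks₁₁)⁻¹ * L.toBlocks₁₂)).PosSemidef)
    (h₂ : (Real.exp ε •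
      (L.toBlocks₂₂ - L.toBlocks₂₁ * (L.toBlocks₁₁)⁻¹ * L.toBlocks₁₂) - S').PosSemidef) :
    IsUnit (L.toBlocks₁₁).det ∧
      (L.toBlocks₂₂ - L.toBlocks₂₁ * (L.toBlocks₁₁)⁻¹ * L.toBlocks₁₂).PosDef ∧
      (Matrix.fromBlocks 1 (-((L.toBlocks₁₁)⁻¹ * L.toBlocks₁₂)) 0 1 *
            Matrix.fromBlocks (L.toBlocks₁₁)⁻¹ 0 0 S'⁻¹ *
            Matrix.fromBlocks 1 0 (-(L.toBlocks₂₁ * (L.toBlocks₁₁)⁻¹)) 1 -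
          Real.exp (-ε) • L⁻¹).PosSemidef ∧
      (Real.exp ε • L⁻¹ -
          Matrix.fromBlocks 1 (-((L.toBlocks₁₁)⁻¹ * L.toBlocks₁₂)) 0 1 *
            Matrix.fromBlocks (L.toBlocks₁₁)⁻¹ 0 0 S'⁻¹ *
            Matrix.fromBlocks 1 0 (-(L.toBlocks₂₁ * (L.toBlocks₁₁)⁻¹)) 1).PosSemidef := by
  have hA : (L.toBlocks₁₁).PosDef := toBlocks11_posDef hL
  have hS : (L.toBlocks₂₂ - L.toBlocks₂₁ * (L.toBlocks₁₁)⁻¹ * L.toBlocks₁₂).PosDef :=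
    schur_posDef hL
  set A := L.toBlocks₁₁ with hA_def
  set B := L.toBlocks₁₂ with hB_def
  set D := L.toBlocks₂₂ with hD_def
  have hC : L.toBlocks₂₁ = Bᴴ := toBlocks21_eq hL.1
  set S : Matrix C C ℝ := D - L.toBlocks₂₁ * A⁻¹ * B with hS_def
  have hAdet : IsUnit A.det := (isUnit_iff_isUnit_det A).mp hA.isUnit
  have hSdet : IsUnit S.det := (isUnit_iff_isUnit_det S).mp hS.isUnit
  set U : Matrix (F ⊕ C) (F ⊕ C) ℝ := fromBlocks 1 (-(A⁻¹ * B)) 0 1 with hU_def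
  set V : Matrix (F ⊕ C) (F ⊕ C) ℝ := fromBlocks 1 0 (-(L.toBlocks₂₁ * A⁻¹)) 1 with hV_def
  have hLblocks : L = fromBlocks A B Bᴴ D := by
    rw [← hC, hA_def, hB_def, hD_def, fromBlocks_toBlocks]
  have hUV : V = Uᴴ := by
    have hAT : Aᵀ = A := by rw [← conjTranspose_eq_transpose_of_trivial, hA.1.eq]
    have hAinvT : A⁻¹ᵀ = A⁻¹ := by rw [transpose_nonsing_inv, hAT]
    rw [hU_def, hV_def, fromBlocks_conjTranspose, hC]
    simp [conjTranspose_eq_transpose_of_trivial, transpose_mul, hAinvT]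
  -- L⁻¹ = U * fromBlocks A⁻¹ 0 0 S⁻¹ * V
  have h1 : L * U = fromBlocks A 0 Bᴴ S := by
    rw [hLblocks, hU_def, hS_def, hC]
    simp only [fromBlocks_multiply, Matrix.mul_one, Matrix.mul_zero, Matrix.one_mul,
      Matrix.zero_mul, add_zero, zero_add, Matrix.mul_neg, ← Matrix.mul_assoc,
      Matrix.mul_nonsing_inv _ hAdet, Matrix.one_mul, neg_add_cancel, neg_add_eq_sub]
  have h2 : fromBlocks A 0 Bᴴ S * fromBlocks A⁻¹ 0 0 S⁻¹ =
      fromBlocks 1 0 (Bᴴ * A⁻¹) 1 := by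
    simp [fromBlocks_multiply, Matrix.mul_nonsing_inv _ hAdet, Matrix.mul_nonsing_inv _ hSdet]
  have h3 : fromBlocks 1 0 (Bᴴ * A⁻¹) 1 * V = 1 := by
    rw [hV_def, hC]
    simp [fromBlocks_multiply, ← fromBlocks_one]
  have hLinv : L⁻¹ = U * fromBlocks A⁻¹ 0 0 S⁻¹ * V := by
    apply inv_eq_right_inv
    calc L * (U * fromBlocks A⁻¹ 0 0 S⁻¹ * V)
        = L * U * fromBlocks A⁻¹ 0 0 S⁻¹ * V := by
          simp only [Matrix.mul_assoc]
      _ = 1 := by rw [h1, h2, h3]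
  -- difference formulas
  have diff : ∀ c : ℝ, U * fromBlocks A⁻¹ 0 0 S'⁻¹ * V - c • L⁻¹ =
      U * fromBlocks ((1 - c) • A⁻¹) 0 0 (S'⁻¹ - c • S⁻¹) * V := by
    intro c
    rw [hLinv]
    rw [show c • (U * fromBlocks A⁻¹ 0 0 S⁻¹ * V) =
        U * (c • fromBlocks A⁻¹ 0 0 S⁻¹) * V by
      rw [Matrix.mul_smul, Matrix.smul_mul]]
    rw [← Matrix.sub_mul, ← Matrix.mul_sub]
    congr 2
    
    ext (i | i) (j | j) <;>
      simp [fromBlocks, sub_smul]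
  have diff' : ∀ c : ℝ, c • L⁻¹ - U * fromBlocks A⁻¹ 0 0 S'⁻¹ * V =
      U * fromBlocks ((c - 1) • A⁻¹) 0 0 (c • S⁻¹ - S'⁻¹) * V := by
    intro c
    rw [hLinv]
    rw [show c • (U * fromBlocks A⁻¹ 0 0 S⁻¹ * V) =
        U * (c • fromBlocks A⁻¹ 0 0 S⁻¹) * V by
      rw [Matrix.mul_smul, Matrix.smul_mul]]
    rw [← Matrix.sub_mul, ← Matrix.mul_sub]
    congr 2
    
    ext (i | i) (j | j) <;>
      simp [fromBlocks, sub_smul]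
  letI : Invertible (Real.exp ε) := invertibleOfNonzero (Real.exp_ne_zero ε)
  letI : Invertible (Real.exp (-ε)) := invertibleOfNonzero (Real.exp_ne_zero (-ε))
  have hinv₁ : (Real.exp ε • S)⁻¹ = Real.exp (-ε) • S⁻¹ := by
    rw [S.inv_smul _ hSdet, invOf_eq_inv, ← Real.exp_neg]
  have hinv₂ : (Real.exp (-ε) • S)⁻¹ = Real.exp ε • S⁻¹ := by
    rw [S.inv_smul _ hSdet, invOf_eq_inv, ← Real.exp_neg, neg_neg]
  refine ⟨hAdet, hS, ?_, ?_⟩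
  · rw [diff (Real.exp (-ε)), hUV]
    apply PosSemidef.mul_mul_conjTranspose_same
    apply fromBlocks_psd
    · exact psd_smul hA.inv.posSemidef
        (sub_nonneg.mpr (Real.exp_le_one_iff.mpr (neg_nonpos.mpr hε)))
    · have := inv_antitone hS' (pd_smul hS (Real.exp_pos ε)) h₂
      rwa [hinv₁] at this
  · rw [diff' (Real.exp ε), hUV]
    apply PosSemidef.mul_mul_conjTranspose_same
    apply fromBlocks_psd
    · exact psd_smul hA.inv.posSemidef (sub_nonneg.mpr (Real.one_le_exp hε))
    · have := inv_antitone (pd_smul hS (Real.exp_pos (-ε))) hS' h₁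
      rwa [hinv₂] at this
end

section
/- (Minimum-energy weighted flow.) Let E and V be finite types, B : Matrix E V ℝ, and w : E → ℝ with w e > 0 for all e. Let W := Matrix.diagonal w, W^{1/2} := Matrix.diagonal (fun e => Real.sqrt (w e)), and L := Bᵀ * W * B. Fix z : V → ℝ and set d := L *ᵥ z and f⋆ := W^{1/2} *ᵥ (B *ᵥ z). Then (i) Bᵀ *ᵥ (W^{1/2} *ᵥ f⋆) = d; (ii) ∑ e, (f⋆ e)^2 = z ⬝ᵥ (L *ᵥ z); and (iii) for every f : E → ℝ with Bᵀ *ᵥ (W^{1/2} *ᵥ f) = d, one has ∑ e, (f⋆ e)^2 ≤ ∑ e, (f e)^2. In particular, the minimum energy of a weighted flow routing d is E_L(d) = z⊤Lz. -/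
open Matrix

/-- Minimum-energy weighted flow: `f⋆ = W^{1/2} B z` routes the demand `d = L z`, its
energy equals `z⊤ L z`, and it minimizes the energy among all weighted flows routing `d`. -/
theorem electric_flow_minimizes_energy
    {E V : Type*} [Fintype E] [Fintype V] [DecidableEq E]
    (B : Matrix E V ℝ) (w : E → ℝ) (hw : ∀ e, 0 < w e) (z : V → ℝ) :
    Bᵀ *ᵥ ((Matrix.diagonal fun e => Real.sqrt (w e)) *ᵥ
        ((Matrix.diagonal fun e => Real.sqrt (w e)) *ᵥ (B *ᵥ z))) =
      (Bᵀ * Matrix.diagonal w * B) *ᵥ z ∧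
    (∑ e, (((Matrix.diagonal fun e => Real.sqrt (w e)) *ᵥ (B *ᵥ z)) e) ^ 2) =
      z ⬝ᵥ ((Bᵀ * Matrix.diagonal w * B) *ᵥ z) ∧
    ∀ f : E → ℝ,
      Bᵀ *ᵥ ((Matrix.diagonal fun e => Real.sqrt (w e)) *ᵥ f) =
        (Bᵀ * Matrix.diagonal w * B) *ᵥ z →
      (∑ e, (((Matrix.diagonal fun e => Real.sqrt (w e)) *ᵥ (B *ᵥ z)) e) ^ 2) ≤
        ∑ e, (f e) ^ 2 := by
  set S : Matrix E E ℝ := Matrix.diagonal fun e => Real.sqrt (w e) with hS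
  have hSS : S * S = Matrix.diagonal w := by
    rw [hS, Matrix.diagonal_mul_diagonal]
    have : (fun e => Real.sqrt (w e) * Real.sqrt (w e)) = w :=
      funext fun e => Real.mul_self_sqrt (hw e).le
    rw [this]
  set g : E → ℝ := S *ᵥ (B *ᵥ z) with hg
  have hge : ∀ e, g e = Real.sqrt (w e) * (B *ᵥ z) e := by
    intro e
    rw [hg, hS]
    exact Matrix.mulVec_diagonal _ _ _
  have h1 : Bᵀ *ᵥ (S *ᵥ g) = (Bᵀ * Matrix.diagonal w * B) *ᵥ z := by
    rw [hg, Matrix.mulVec_mulVec, Matrix.mulVec_mulVec, Matrix.mulVec_mulVec, ← hSS,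
      Matrix.mul_assoc Bᵀ S S]
  have h2 : (∑ e, (g e) ^ 2) = z ⬝ᵥ ((Bᵀ * Matrix.diagonal w * B) *ᵥ z) := by
    have : z ⬝ᵥ ((Bᵀ * Matrix.diagonal w * B) *ᵥ z)
        = (B *ᵥ z) ⬝ᵥ (Matrix.diagonal w *ᵥ (B *ᵥ z)) := by
      rw [← Matrix.mulVec_mulVec, ← Matrix.mulVec_mulVec, Matrix.dotProduct_mulVec,
        Matrix.vecMul_transpose]
    rw [this]
    simp only [dotProduct, Matrix.mulVec_diagonal]
    refine Finset.sum_congr rfl fun e _ => ?_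
    rw [hge]
    have := Real.mul_self_sqrt (hw e).le
    ring_nf
    nlinarith [this]
  refine ⟨h1, h2, fun f hf => ?_⟩
  have hvS : ∀ v : E → ℝ, v ᵥ* S = S *ᵥ v := by
    intro v
    funext e
    simp [hS, Matrix.vecMul_diagonal, Matrix.mulVec_diagonal, mul_comm]
  have hzero : Bᵀ *ᵥ (S *ᵥ (f - g)) = 0 := by
    have : S *ᵥ (f - g) = S *ᵥ f - S *ᵥ g := by
      rw [Matrix.mulVec_sub]
    rw [this, Matrix.mulVec_sub, hf, h1, sub_self]
  have hdot : (f - g) ⬝ᵥ g = 0 := by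
    calc (f - g) ⬝ᵥ g = (f - g) ⬝ᵥ (S *ᵥ (B *ᵥ z)) := by rw [hg]
      _ = ((f - g) ᵥ* S) ⬝ᵥ (B *ᵥ z) := by rw [Matrix.dotProduct_mulVec]
      _ = (S *ᵥ (f - g)) ⬝ᵥ (B *ᵥ z) := by rw [hvS]
      _ = ((S *ᵥ (f - g)) ᵥ* B) ⬝ᵥ z := by rw [Matrix.dotProduct_mulVec]
      _ = (Bᵀ *ᵥ (S *ᵥ (f - g))) ⬝ᵥ z := by rw [Matrix.mulVec_transpose]
      _ = 0 := by rw [hzero]; simp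
  have expand : ∑ e, (f e) ^ 2
      = ∑ e, (g e) ^ 2 + 2 * ((f - g) ⬝ᵥ g) + ∑ e, (f e - g e) ^ 2 := by
    simp only [dotProduct, Pi.sub_apply, Finset.mul_sum, ← Finset.sum_add_distrib]
    refine Finset.sum_congr rfl fun e _ => ?_
    ring
  rw [expand, hdot]
  have : 0 ≤ ∑ e, (f e - g e) ^ 2 := Finset.sum_nonneg fun e _ => sq_nonneg _
  linarith
end

section
/- (Energy decomposition across a graph decomposition.) Let E₁, E₂, V be finite types, B₁ : Matrix E₁ V ℝ, B₂ : Matrix E₂ V ℝ, and w₁ : E₁ → ℝ, w₂ : E₂ → ℝ strictly positive weight vectors. Let L₁ := B₁ᵀ * W₁ * B₁ and L₂ := B₂ᵀ * W₂ * B₂ with W_i the diagonal matrices of w_i, and let L := L₁ + L₂. Fix z : V → ℝ and set d := L *ᵥ z, d₁ := L₁ *ᵥ z, d₂ := L₂ *ᵥ z. Then the minimum of ∑_{e : E₁ ⊕ E₂} (f e)^2 over all f : E₁ ⊕ E₂ → ℝ satisfying B₁ᵀ *ᵥ (W₁^{1/2} *ᵥ (f ∘ Sum.inl)) + B₂ᵀ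 *ᵥ (W₂^{1/2} *ᵥ (f ∘ Sum.inr)) = d exists, equals z ⬝ᵥ (L₁ *ᵥ z) + z ⬝ᵥ (L₂ *ᵥ z), and equals the sum of the minima of the two subproblems (minimizing ∑ (f₁ e)^2 over f₁ with B₁ᵀ *ᵥ (W₁^{1/2} *ᵥ f₁) = d₁, plus the analogous minimum for d₂). That is, E_L(d) = E_{L₁}(d₁) + E_{L₂}(d₂). -/
open Matrix

lemma key_ineq {E : Type*} [Fintype E] (f g : E → ℝ) (h : f ⬝ᵥ g = g ⬝ᵥ g) :
    ∑ e, (g e)^2 ≤ ∑ e, (f e)^2 := by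
  have h0 : 0 ≤ ∑ e, (f e - g e)^2 := Finset.sum_nonneg fun e _ => sq_nonneg _
  have h1 : ∑ e, (f e - g e)^2 = ∑ e, (f e)^2 - 2 * (f ⬝ᵥ g) + g ⬝ᵥ g := by
    simp only [dotProduct, Finset.mul_sum, ← Finset.sum_sub_distrib, ← Finset.sum_add_distrib]
    congr 1; ext e; ring
  have h2 : g ⬝ᵥ g = ∑ e, (g e)^2 := by simp [dotProduct, sq]
  rw [h1, h, h2] at h0
  linarith

lemma diag_sqrt {E : Type*} [Fintype E] [DecidableEq E] (w : E → ℝ) (hw : ∀ e, 0 < w e)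
    (v : E → ℝ) :
    (Matrix.diagonal fun e => Real.sqrt (w e)) *ᵥ (fun e => Real.sqrt (w e) * v e)
      = Matrix.diagonal w *ᵥ v := by
  funext e
  simp [mulVec_diagonal, ← mul_assoc, Real.mul_self_sqrt (hw e).le]

lemma g_sum {E V : Type*} [Fintype E] [Fintype V] [DecidableEq E] (B : Matrix E V ℝ) (w : E → ℝ)
    (hw : ∀ e, 0 < w e) (z : V → ℝ) :
    ∑ e, (Real.sqrt (w e) * (B *ᵥ z) e)^2 = z ⬝ᵥ ((Bᵀ * Matrix.diagonal w * B) *ᵥ z) := by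
  rw [show Bᵀ * Matrix.diagonal w * B = Bᵀ * (Matrix.diagonal w * B) by rw [Matrix.mul_assoc]]
  rw [← mulVec_mulVec, ← mulVec_mulVec, dotProduct_mulVec, vecMul_transpose]
  simp only [dotProduct, mulVec_diagonal]
  congr 1; ext e
  rw [mul_pow, Real.sq_sqrt (hw e).le]; ring

lemma dot_g {E V : Type*} [Fintype E] [Fintype V] [DecidableEq E] (B : Matrix E V ℝ)
    (w : E → ℝ) (f : E → ℝ) (z : V → ℝ) :
    f ⬝ᵥ (fun e => Real.sqrt (w e) * (B *ᵥ z) e)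
      = (Bᵀ *ᵥ ((Matrix.diagonal fun e => Real.sqrt (w e)) *ᵥ f)) ⬝ᵥ z := by
  rw [mulVec_transpose, ← dotProduct_mulVec]
  simp only [dotProduct, mulVec_diagonal]
  congr 1; ext e; ring

lemma energy_single {E V : Type*} [Fintype E] [Fintype V] [DecidableEq E]
    (B : Matrix E V ℝ) (w : E → ℝ) (hw : ∀ e, 0 < w e) (z : V → ℝ) :
    IsLeast
      {x : ℝ | ∃ f : E → ℝ,
        Bᵀ *ᵥ ((Matrix.diagonal fun e => Real.sqrt (w e)) *ᵥ f) =
          (Bᵀ * Matrix.diagonal w * B) *ᵥ z ∧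
        x = ∑ e, (f e) ^ 2}
      (z ⬝ᵥ ((Bᵀ * Matrix.diagonal w * B) *ᵥ z)) := by
  set g : E → ℝ := fun e => Real.sqrt (w e) * (B *ᵥ z) e with hg
  constructor
  · refine ⟨g, ?_, (g_sum B w hw z).symm⟩
    rw [hg, diag_sqrt w hw, mulVec_mulVec, mulVec_mulVec, Matrix.mul_assoc]
  · rintro x ⟨f, hf, rfl⟩
    rw [← g_sum B w hw z]
    apply key_ineq
    have h1 : f ⬝ᵥ g = z ⬝ᵥ ((Bᵀ * Matrix.diagonal w * B) *ᵥ z) := by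
      rw [hg, dot_g, hf, dotProduct_comm]
    have h2 : g ⬝ᵥ g = z ⬝ᵥ ((Bᵀ * Matrix.diagonal w * B) *ᵥ z) := by
      rw [← g_sum B w hw z]; simp [dotProduct, hg, sq]
    rw [h1, h2]

/-- Energy decomposition across a graph decomposition: with `L = L₁ + L₂`, `d = L z`,
`dᵢ = Lᵢ z`, the minimum energy of a weighted flow on `E₁ ⊕ E₂` routing `d` exists,
equals `z⊤L₁z + z⊤L₂z`, and equals the sum of the minimum energies of the two
subproblems routing `d₁` and `d₂`. -/
theorem energy_decomposition
    {E₁ E₂ V : Type*} [Fintype E₁] [Fintype E₂] [Fintype V]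
    [DecidableEq E₁] [DecidableEq E₂]
    (B₁ : Matrix E₁ V ℝ) (B₂ : Matrix E₂ V ℝ)
    (w₁ : E₁ → ℝ) (w₂ : E₂ → ℝ) (hw₁ : ∀ e, 0 < w₁ e) (hw₂ : ∀ e, 0 < w₂ e)
    (z : V → ℝ) :
    IsLeast
      {x : ℝ | ∃ f : E₁ ⊕ E₂ → ℝ,
        B₁ᵀ *ᵥ ((Matrix.diagonal fun e => Real.sqrt (w₁ e)) *ᵥ (f ∘ Sum.inl)) +
            B₂ᵀ *ᵥ ((Matrix.diagonal fun e => Real.sqrt (w₂ e)) *ᵥ (f ∘ Sum.inr)) =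
          (B₁ᵀ * Matrix.diagonal w₁ * B₁ + B₂ᵀ * Matrix.diagonal w₂ * B₂) *ᵥ z ∧
        x = ∑ e, (f e) ^ 2}
      (z ⬝ᵥ ((B₁ᵀ * Matrix.diagonal w₁ * B₁) *ᵥ z) +
        z ⬝ᵥ ((B₂ᵀ * Matrix.diagonal w₂ * B₂) *ᵥ z)) ∧
    ∃ m₁ m₂ : ℝ,
      IsLeast
        {x : ℝ | ∃ f₁ : E₁ → ℝ,
          B₁ᵀ *ᵥ ((Matrix.diagonal fun e => Real.sqrt (w₁ e)) *ᵥ f₁) =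
            (B₁ᵀ * Matrix.diagonal w₁ * B₁) *ᵥ z ∧
          x = ∑ e, (f₁ e) ^ 2} m₁ ∧
      IsLeast
        {x : ℝ | ∃ f₂ : E₂ → ℝ,
          B₂ᵀ *ᵥ ((Matrix.diagonal fun e => Real.sqrt (w₂ e)) *ᵥ f₂) =
            (B₂ᵀ * Matrix.diagonal w₂ * B₂) *ᵥ z ∧
          x = ∑ e, (f₂ e) ^ 2} m₂ ∧
      m₁ + m₂ =
        z ⬝ᵥ ((B₁ᵀ * Matrix.diagonal w₁ * B₁) *ᵥ z) +
          z ⬝ᵥ ((B₂ᵀ * Matrix.diagonal w₂ * B₂) *ᵥ z) := by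
  set g₁ : E₁ → ℝ := fun e => Real.sqrt (w₁ e) * (B₁ *ᵥ z) e with hg1
  set g₂ : E₂ → ℝ := fun e => Real.sqrt (w₂ e) * (B₂ *ᵥ z) e with hg2
  set g : E₁ ⊕ E₂ → ℝ := Sum.elim g₁ g₂ with hg
  have hgl : g ∘ Sum.inl = g₁ := rfl
  have hgr : g ∘ Sum.inr = g₂ := rfl
  have hgsum : ∑ e, (g e)^2 =
      z ⬝ᵥ ((B₁ᵀ * Matrix.diagonal w₁ * B₁) *ᵥ z) +
        z ⬝ᵥ ((B₂ᵀ * Matrix.diagonal w₂ * B₂) *ᵥ z) := by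
    rw [Fintype.sum_sum_type]
    simp only [hg, Sum.elim_inl, Sum.elim_inr]
    rw [g_sum B₁ w₁ hw₁ z, g_sum B₂ w₂ hw₂ z]
  constructor
  · constructor
    · refine ⟨g, ?_, hgsum.symm⟩
      rw [hgl, hgr, hg1, hg2, diag_sqrt w₁ hw₁, diag_sqrt w₂ hw₂,
        mulVec_mulVec, mulVec_mulVec, mulVec_mulVec, mulVec_mulVec,
        add_mulVec, Matrix.mul_assoc, Matrix.mul_assoc]
    · rintro x ⟨f, hf, rfl⟩
      rw [← hgsum]
      apply key_ineq
      have hdg : ∀ (h : E₁ ⊕ E₂ → ℝ), h ⬝ᵥ g = (h ∘ Sum.inl) ⬝ᵥ g₁ + (h ∘ Sum.inr) ⬝ᵥ g₂ := by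
        intro h
        rw [dotProduct, Fintype.sum_sum_type]
        simp [hg, dotProduct]
      have h1 : f ⬝ᵥ g = z ⬝ᵥ ((B₁ᵀ * Matrix.diagonal w₁ * B₁) *ᵥ z) +
          z ⬝ᵥ ((B₂ᵀ * Matrix.diagonal w₂ * B₂) *ᵥ z) := by
        rw [hdg, hg1, hg2, dot_g, dot_g, ← add_dotProduct, hf, add_mulVec,
          dotProduct_comm, dotProduct_add]
      have h2 : g ⬝ᵥ g = ∑ e, (g e)^2 := by simp [dotProduct, sq]
      rw [h1, h2, hgsum]
  · exact ⟨_, _, energy_single B₁ w₁ hw₁ z, energy_single B₂ w₂ hw₂ z, rfl⟩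
end

section
/- (Energy under approximate Schur complement.) Let F and C be finite types, let L be a symmetric positive definite real matrix indexed by F ⊕ C, and let S := L_CC − L_CF * L_FF⁻¹ * L_FC be its Schur complement onto C. Let ε ≥ 0 and let L' be a symmetric positive definite matrix indexed by C with exp(−ε) • S ⪯ L' ⪯ exp(ε) • S. For any z : C → ℝ, let d : F ⊕ C → ℝ be the vector that is 0 on F and equals L' *ᵥ z on C. Then d ⬝ᵥ (L⁻¹ *ᵥ d) ≤ exp(ε) * (z ⬝ᵥ (L' *ᵥ z)). -/
open Matrix

/-- Energy under approximate Schur complement: routing a demand `d = L' z` supported on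
`C` through the full positive definite matrix `L` costs at most `exp ε` times its energy
on the `ε`-approximate Schur complement `L'` of `L` onto `C`. -/
theorem energy_approx_schur_complement
    {F C : Type*} [Fintype F] [Fintype C] [DecidableEq F] [DecidableEq C]
    (L : Matrix (F ⊕ C) (F ⊕ C) ℝ) (hL : L.PosDef)
    (ε : ℝ) (hε : 0 ≤ ε)
    (L' : Matrix C C ℝ) (hL' : L'.PosDef)
    (h₁ : (L' - Real.exp (-ε) •
      (L.toBlocks₂₂ - L.toBlocks₂₁ * (L.toBlocks₁₁)⁻¹ * L.toBlocks₁₂)).PosSemidef)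
    (h₂ : (Real.exp ε •
      (L.toBlocks₂₂ - L.toBlocks₂₁ * (L.toBlocks₁₁)⁻¹ * L.toBlocks₁₂) - L').PosSemidef)
    (z : C → ℝ) :
    (Sum.elim (fun _ => (0 : ℝ)) (L' *ᵥ z)) ⬝ᵥ
        (L⁻¹ *ᵥ Sum.elim (fun _ => (0 : ℝ)) (L' *ᵥ z)) ≤
      Real.exp ε * (z ⬝ᵥ (L' *ᵥ z)) := by
  classical
  set A := L.toBlocks₁₁ with hA
  set B := L.toBlocks₁₂ with hB
  set Bt := L.toBlocks₂₁ with hBt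
  set D := L.toBlocks₂₂ with hD
  have hLblocks : L = fromBlocks A B Bt D := (fromBlocks_toBlocks L).symm
  -- symmetry of L' as a bilinear form
  have hL't : L'ᵀ = L' := by
    rw [← conjTranspose_eq_transpose_of_trivial]; exact hL'.1
  have hsym : ∀ u v : C → ℝ, u ⬝ᵥ (L' *ᵥ v) = v ⬝ᵥ (L' *ᵥ u) := by
    intro u v
    rw [dotProduct_mulVec, ← mulVec_transpose, hL't, dotProduct_comm]
  -- A is positive definite
  have hApd : A.PosDef := by
    refine posDef_iff_dotProduct_mulVec.mpr ⟨?_, ?_⟩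
    · ext i j
      have := congrFun (congrFun hL.1 (Sum.inl i)) (Sum.inl j)
      simpa [conjTranspose_apply, hA, toBlocks₁₁] using this
    · intro x hx
      have hx0 : Sum.elim x (0 : C → ℝ) ≠ 0 := by
        intro h
        apply hx
        funext i
        exact congrFun h (Sum.inl i)
      have := hL.dotProduct_mulVec_pos hx0
      rw [hLblocks] at this
      simpa [fromBlocks_mulVec, sumElim_dotProduct_sumElim] using this
  haveI : Invertible A := A.invertibleOfIsUnitDet (isUnit_iff_ne_zero.2 hApd.det_pos.ne')
  haveI : Invertible L := L.invertibleOfIsUnitDet (isUnit_iff_ne_zero.2 hL.det_pos.ne')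
  set S := D - Bt * A⁻¹ * B with hS
  have hinvA : ⅟A = A⁻¹ := invOf_eq_nonsing_inv A
  -- S is invertible
  have hdet : L.det = A.det * S.det := by
    rw [hLblocks, det_fromBlocks₁₁, hinvA, ← hS]
  have hdetS : S.det ≠ 0 := by
    intro h
    rw [h, mul_zero] at hdet
    exact hL.det_pos.ne' hdet
  haveI : Invertible S := S.invertibleOfIsUnitDet (isUnit_iff_ne_zero.2 hdetS)
  have hinvS : ⅟S = S⁻¹ := invOf_eq_nonsing_inv S
  -- S is positive semidefinite
  have hBtB : Bt = Bᴴ := by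
    ext i j
    have := congrFun (congrFun hL.1 (Sum.inr i)) (Sum.inl j)
    simpa [conjTranspose_apply, hB, hBt, toBlocks₁₂, toBlocks₂₁] using this.symm
  have hSpsd : S.PosSemidef := by
    rw [hS, hBtB]
    exact (PosDef.fromBlocks₁₁ B D hApd).mp
      (by rw [← hBtB, ← hLblocks]; exact hL.posSemidef)
  -- the key identity : d⊤ L⁻¹ d = w⊤ S⁻¹ w
  set w := L' *ᵥ z with hw
  have h0fun : (fun _ : F => (0 : ℝ)) = (0 : F → ℝ) := rfl
  have hLinv : L⁻¹ = fromBlocks (A⁻¹ + A⁻¹ * B * S⁻¹ * Bt * A⁻¹) (-(A⁻¹ * B * S⁻¹))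
      (-(S⁻¹ * Bt * A⁻¹)) S⁻¹ := by
    haveI instFB : Invertible (fromBlocks A B Bt D) := hLblocks ▸ ‹Invertible L›
    haveI instS' : Invertible (D - Bt * ⅟A * B) := by
      rw [hinvA, ← hS]; infer_instance
    have h1 : L⁻¹ = ⅟(fromBlocks A B Bt D) := by
      apply Matrix.inv_eq_right_inv
      rw [hLblocks]
      exact mul_invOf_self _
    rw [h1, invOf_fromBlocks₁₁_eq]
    simp only [invOf_eq_nonsing_inv, hinvA]
    try rw [← hS]
  have key : (Sum.elim (fun _ => (0 : ℝ)) w) ⬝ᵥ (L⁻¹ *ᵥ Sum.elim (fun _ => (0 : ℝ)) w)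
      = w ⬝ᵥ (S⁻¹ *ᵥ w) := by
    rw [h0fun, hLinv, fromBlocks_mulVec, sumElim_dotProduct_sumElim]
    simp
  rw [key]
  -- now the scalar argument
  set y := S⁻¹ *ᵥ w with hy
  have hSy : S *ᵥ y = w := by
    rw [hy, mulVec_mulVec, Matrix.mul_nonsing_inv S (isUnit_iff_ne_zero.2 hdetS), one_mulVec]
  set s := w ⬝ᵥ y with hs
  have hs0 : 0 ≤ s := by
    have := hSpsd.inv.dotProduct_mulVec_nonneg w
    simpa [hs, hy] using this
  set a := z ⬝ᵥ (L' *ᵥ z) with ha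
  have ha0 : 0 ≤ a := by simpa using hL'.posSemidef.dotProduct_mulVec_nonneg z
  set c := y ⬝ᵥ (L' *ᵥ y) with hc
  have hcs : c ≤ Real.exp ε * s := by
    have h := h₂.dotProduct_mulVec_nonneg y
    have hyS : y ⬝ᵥ (S *ᵥ y) = s := by rw [hSy, dotProduct_comm, ← hs]
    rw [star_trivial, sub_mulVec, dotProduct_sub, smul_mulVec, dotProduct_smul,
      hyS] at h
    simp only [smul_eq_mul, hc] at h ⊢
    linarith
  -- Cauchy-Schwarz via discriminant
  have hq : ∀ t : ℝ, 0 ≤ a * (t * t) + (2 * s) * t + c := by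
    intro t
    have h := hL'.posSemidef.dotProduct_mulVec_nonneg (y + t • z)
    rw [star_trivial] at h
    have hyw : y ⬝ᵥ w = s := dotProduct_comm y w ▸ hs
    have h1 : y ⬝ᵥ (L' *ᵥ z) = s := by rw [← hw, hyw]
    have h2 : z ⬝ᵥ (L' *ᵥ y) = s := by rw [hsym, h1]
    rw [mulVec_add, mulVec_smul, dotProduct_add, add_dotProduct, add_dotProduct,
      dotProduct_smul, dotProduct_smul, smul_dotProduct, smul_dotProduct,
      h1, h2, ← hc, ← ha] at h
    simp only [smul_eq_mul] at h
    nlinarith [h]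
  have hdisc := discrim_le_zero hq
  rw [discrim] at hdisc
  have hsq : s * s ≤ a * c := by
    clear_value s a c
    nlinarith [hdisc]
  -- conclude
  clear_value s a c
  rcases hs0.eq_or_lt with h | h
  · rw [← h]
    positivity
  · have h3 : s * s ≤ (Real.exp ε * a) * s :=
      calc s * s ≤ a * c := hsq
        _ ≤ a * (Real.exp ε * s) := mul_le_mul_of_nonneg_left hcs ha0
        _ = (Real.exp ε * a) * s := by ring
    exact le_of_mul_le_mul_right h3 h
end

section
/- (Orthogonal decomposition and error bound for approximate electric flows.) Let E and V be finite types, B : Matrix E V ℝ, w : E → ℝ with w e > 0 for all e, W := Matrix.diagonal w, W^{1/2} := Matrix.diagonal (fun e => Real.sqrt (w e)), and L := Bᵀ * W * B; assume L is invertible. Let d : V → ℝ and let f⋆ := W^{1/2} *ᵥ (B *ᵥ (L⁻¹ *ᵥ d)) be the weighted electric flow routing d. Let f̃ : E → ℝ be any vector with Bᵀ *ᵥ (W^{1/2} *ᵥ f̃) = d, and let ε ≥ 0 satisfy ∑ e, (f̃ e)^2 ≤ exp(ε) * (d ⬝ᵥ (L⁻¹ *ᵥ d)). Then (i) f⋆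 ⬝ᵥ (f̃ − f⋆) = 0, and (ii) ∑ e, ((f̃ − f⋆) e)^2 ≤ (exp(ε) − 1) * ∑ e, (f⋆ e)^2. -/
open Matrix

lemma mulVec_dotProduct_swap {m n : Type*} [Fintype m] [Fintype n]
    (M : Matrix m n ℝ) (x : n → ℝ) (z : m → ℝ) :
    (M *ᵥ x) ⬝ᵥ z = x ⬝ᵥ (Mᵀ *ᵥ z) := by
  rw [dotProduct_comm, Matrix.dotProduct_mulVec, ← Matrix.mulVec_transpose,
    dotProduct_comm]

/-- Orthogonal decomposition and error bound for approximate electric flows: if `f̃`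
routes `d` and its energy is at most `exp ε` times the optimum `d⊤L⁻¹d`, then `f̃ − f⋆`
is orthogonal to the electric flow `f⋆ = W^{1/2} B L⁻¹ d` and
`‖f̃ − f⋆‖² ≤ (exp ε − 1) ‖f⋆‖²`. -/
theorem approx_electric_flow_error_bound
    {E V : Type*} [Fintype E] [Fintype V] [DecidableEq E] [DecidableEq V]
    (B : Matrix E V ℝ) (w : E → ℝ) (hw : ∀ e, 0 < w e)
    (hL : IsUnit (Bᵀ * Matrix.diagonal w * B).det)
    (d : V → ℝ) (ftilde : E → ℝ) (ε : ℝ) (hε : 0 ≤ ε)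
    (hroute : Bᵀ *ᵥ ((Matrix.diagonal fun e => Real.sqrt (w e)) *ᵥ ftilde) = d)
    (henergy : ∑ e, (ftilde e) ^ 2 ≤
      Real.exp ε * (d ⬝ᵥ ((Bᵀ * Matrix.diagonal w * B)⁻¹ *ᵥ d))) :
    ((Matrix.diagonal fun e => Real.sqrt (w e)) *ᵥ
          (B *ᵥ ((Bᵀ * Matrix.diagonal w * B)⁻¹ *ᵥ d))) ⬝ᵥ
        (ftilde - (Matrix.diagonal fun e => Real.sqrt (w e)) *ᵥ
          (B *ᵥ ((Bᵀ * Matrix.diagonal w * B)⁻¹ *ᵥ d))) = 0 ∧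
      ∑ e, ((ftilde - (Matrix.diagonal fun e => Real.sqrt (w e)) *ᵥ
          (B *ᵥ ((Bᵀ * Matrix.diagonal w * B)⁻¹ *ᵥ d))) e) ^ 2 ≤
        (Real.exp ε - 1) *
          ∑ e, (((Matrix.diagonal fun e => Real.sqrt (w e)) *ᵥ
            (B *ᵥ ((Bᵀ * Matrix.diagonal w * B)⁻¹ *ᵥ d))) e) ^ 2 := by
  set S : Matrix E E ℝ := Matrix.diagonal fun e => Real.sqrt (w e) with hSdef
  set L : Matrix V V ℝ := Bᵀ * Matrix.diagonal w * B with hLdef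
  set y : V → ℝ := L⁻¹ *ᵥ d with hydef
  set fstar : E → ℝ := S *ᵥ (B *ᵥ y) with hfstar
  have hS2 : S * S = Matrix.diagonal w := by
    rw [hSdef, Matrix.diagonal_mul_diagonal]
    have : (fun e => Real.sqrt (w e) * Real.sqrt (w e)) = w :=
      funext fun e => Real.mul_self_sqrt (hw e).le
    rw [this]
  have hST : Sᵀ = S := Matrix.diagonal_transpose _
  -- f⋆ routes d
  have hkey : Bᵀ *ᵥ (S *ᵥ fstar) = d := by
    show Bᵀ *ᵥ (S *ᵥ (S *ᵥ (B *ᵥ y))) = d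
    rw [Matrix.mulVec_mulVec, Matrix.mulVec_mulVec, Matrix.mulVec_mulVec,
      Matrix.mul_assoc Bᵀ S S, hS2, hydef, Matrix.mulVec_mulVec, ← hLdef,
      Matrix.mul_nonsing_inv _ hL, Matrix.one_mulVec]
  -- orthogonality
  have hz : Bᵀ *ᵥ (S *ᵥ (ftilde - fstar)) = 0 := by
    rw [Matrix.mulVec_sub, Matrix.mulVec_sub, hroute, hkey, sub_self]
  have horth : fstar ⬝ᵥ (ftilde - fstar) = 0 := by
    calc fstar ⬝ᵥ (ftilde - fstar)
        = (S *ᵥ (B *ᵥ y)) ⬝ᵥ (ftilde - fstar) := rfl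
      _ = (B *ᵥ y) ⬝ᵥ (Sᵀ *ᵥ (ftilde - fstar)) := mulVec_dotProduct_swap ..
      _ = y ⬝ᵥ (Bᵀ *ᵥ (Sᵀ *ᵥ (ftilde - fstar))) := mulVec_dotProduct_swap ..
      _ = 0 := by rw [hST, hz, dotProduct_zero]
  -- energy of f⋆
  have henergy_star : fstar ⬝ᵥ fstar = d ⬝ᵥ y := by
    calc fstar ⬝ᵥ fstar
        = (S *ᵥ (B *ᵥ y)) ⬝ᵥ fstar := rfl
      _ = (B *ᵥ y) ⬝ᵥ (Sᵀ *ᵥ fstar) := mulVec_dotProduct_swap ..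
      _ = y ⬝ᵥ (Bᵀ *ᵥ (Sᵀ *ᵥ fstar)) := mulVec_dotProduct_swap ..
      _ = y ⬝ᵥ d := by rw [hST, hkey]
      _ = d ⬝ᵥ y := dotProduct_comm _ _
  refine ⟨horth, ?_⟩
  have hexp : ∑ e, ((ftilde - fstar) e) ^ 2
      = (∑ e, (ftilde e) ^ 2) - fstar ⬝ᵥ fstar := by
    have hdot : (ftilde - fstar) ⬝ᵥ (ftilde - fstar)
        = ftilde ⬝ᵥ ftilde - fstar ⬝ᵥ fstar - 2 * (fstar ⬝ᵥ (ftilde - fstar)) := by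
      simp only [dotProduct, Pi.sub_apply]
      rw [Finset.mul_sum, ← Finset.sum_sub_distrib, ← Finset.sum_sub_distrib]
      congr 1; funext e; ring
    have h2 : ∑ e, ((ftilde - fstar) e) ^ 2 = (ftilde - fstar) ⬝ᵥ (ftilde - fstar) := by
      simp [dotProduct, sq]
    have h3 : ∑ e, (ftilde e) ^ 2 = ftilde ⬝ᵥ ftilde := by
      simp [dotProduct, sq]
    rw [h2, hdot, horth, h3]; ring
  have hsum_star : ∑ e, (fstar e) ^ 2 = fstar ⬝ᵥ fstar := by
    simp [dotProduct, sq]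
  rw [hexp, hsum_star, henergy_star]
  have hring : (Real.exp ε - 1) * (d ⬝ᵥ y) = Real.exp ε * (d ⬝ᵥ y) - d ⬝ᵥ y := by ring
  linarith
end

section
/- (Dyadic chain decomposition.) For all natural numbers t, a, b with a < b and b ≤ a + 2^t, there exist a natural number s with 1 ≤ s ≤ 2*t + 1 and a strictly increasing finite sequence k : Fin (s+1) → ℕ with k 0 = a and k s = b, such that for every j < s there is a natural number e with k (j+1) − k j = 2^e and 2^e ∣ k (j+1); i.e., each consecutive difference is a power of two that divides the larger endpoint. -/
def IsDyadicChain (f : ℕ → ℕ) (s : ℕ) : Prop :=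
  ∀ j < s, f j < f (j+1) ∧ ∃ e : ℕ, f (j+1) - f j = 2^e ∧ 2^e ∣ f (j+1)

lemma chain_concat {f g : ℕ → ℕ} {s₁ s₂ : ℕ}
    (hf : IsDyadicChain f s₁) (hg : IsDyadicChain g s₂) (hfg : f s₁ = g 0) :
    ∃ h : ℕ → ℕ, h 0 = f 0 ∧ h (s₁ + s₂) = g s₂ ∧ IsDyadicChain h (s₁ + s₂) := by
  refine ⟨fun j => if j ≤ s₁ then f j else g (j - s₁), by simp, ?_, ?_⟩
  · by_cases h2 : s₂ = 0
    · subst h2; simp [hfg]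
    · beta_reduce
      rw [if_neg (by omega)]
      congr 1; omega
  · intro j hj
    beta_reduce
    by_cases h1 : j + 1 ≤ s₁
    · simp only [if_pos h1, if_pos (by omega : j ≤ s₁)]
      exact hf j (by omega)
    · rw [if_neg h1]
      have hgj := hg (j - s₁) (by omega)
      have e1 : j + 1 - s₁ = (j - s₁) + 1 := by omega
      by_cases h2 : j ≤ s₁
      · have hjs : j = s₁ := by omega
        subst hjs
        rw [if_pos le_rfl, e1, hfg]
        simpa using hgj
      · rw [if_neg h2, e1]
        exact hgj

lemma single_step (c : ℕ) (e : ℕ) (hd : 2^e ∣ c + 2^e) :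
    IsDyadicChain (fun j => c + j * 2^e) 1 := by
  intro j hj
  have : j = 0 := by omega
  subst this
  have hp : 0 < (2:ℕ)^e := pow_pos (by norm_num) e
  refine ⟨by show c + 0 * 2^e < c + (0+1) * 2^e; omega,
    e, by show c + (0+1) * 2^e - (c + 0 * 2^e) = 2^e; omega, by simpa using hd⟩

lemma lemA : ∀ t a m : ℕ, a < m → m ≤ a + 2^t → 2^t ∣ m →
    ∃ s f, 1 ≤ s ∧ s ≤ t + 1 ∧ f 0 = a ∧ f s = m ∧ IsDyadicChain f s := by
  intro t
  induction t with
  | zero =>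
    intro a m h1 h2 _
    have hm : m = a + 1 := by omega
    refine ⟨1, fun j => a + j, le_refl 1, le_refl 1, rfl, by show a + 1 = m; omega, ?_⟩
    intro j hj
    have : j = 0 := by omega
    subst this
    exact ⟨by show a + 0 < a + (0+1); omega,
      0, by show a + (0+1) - (a + 0) = 2^0; norm_num, one_dvd _⟩
  | succ t ih =>
    intro a m h1 h2 hd
    have hdt : 2^t ∣ m := dvd_trans (pow_dvd_pow 2 (Nat.le_succ t)) hd
    have hps : (2:ℕ)^(t+1) = 2^t + 2^t := by rw [pow_succ]; omega
    by_cases hc : m ≤ a + 2^t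
    · obtain ⟨s, f, hs1, hs2, h0, hsm, hch⟩ := ih a m h1 hc hdt
      exact ⟨s, f, hs1, by omega, h0, hsm, hch⟩
    · push_neg at hc
      have hpos : 0 < (2:ℕ)^t := pow_pos (by norm_num) t
      set c := m - 2^t with hcdef
      have hac : a < c := by omega
      have hca : c ≤ a + 2^t := by omega
      have hdc : 2^t ∣ c := Nat.dvd_sub hdt dvd_rfl
      obtain ⟨s, f, hs1, hs2, h0, hsm, hch⟩ := ih a c hac hca hdc
      have hstep : IsDyadicChain (fun j => c + j * 2^t) 1 := by
        apply single_step
        have : c + 2^t = m := by omega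
        rw [this]; exact hdt
      obtain ⟨h, hh0, hhs, hhch⟩ := chain_concat hch hstep (by simpa using hsm)
      refine ⟨s + 1, h, by omega, by omega, by rw [hh0, h0], ?_, hhch⟩
      rw [hhs]; simp; omega
  
lemma lemA' (t a m : ℕ) (h1 : a < m) (h2 : m ≤ a + 2^(t+1)) (hd : 2^t ∣ m) :
    ∃ s f, 1 ≤ s ∧ s ≤ t + 2 ∧ f 0 = a ∧ f s = m ∧ IsDyadicChain f s := by
  have hps : (2:ℕ)^(t+1) = 2^t + 2^t := by rw [pow_succ]; omega
  by_cases hc : m ≤ a + 2^t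
  · obtain ⟨s, f, hs1, hs2, h0, hsm, hch⟩ := lemA t a m h1 hc hd
    exact ⟨s, f, hs1, by omega, h0, hsm, hch⟩
  · push_neg at hc
    have hpos : 0 < (2:ℕ)^t := pow_pos (by norm_num) t
    set c := m - 2^t with hcdef
    have hac : a < c := by omega
    have hca : c ≤ a + 2^t := by omega
    have hdc : 2^t ∣ c := Nat.dvd_sub hd dvd_rfl
    obtain ⟨s, f, hs1, hs2, h0, hsm, hch⟩ := lemA t a c hac hca hdc
    have hstep : IsDyadicChain (fun j => c + j * 2^t) 1 := by
      apply single_step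
      have : c + 2^t = m := by omega
      rw [this]; exact hd
    obtain ⟨h, hh0, hhs, hhch⟩ := chain_concat hch hstep (by simpa using hsm)
    refine ⟨s + 1, h, by omega, by omega, by rw [hh0, h0], ?_, hhch⟩
    rw [hhs]; simp; omega

lemma lemB : ∀ t m b : ℕ, m < b → b ≤ m + 2^t → 2^t ∣ m →
    ∃ s f, 1 ≤ s ∧ s ≤ t + 1 ∧ f 0 = m ∧ f s = b ∧ IsDyadicChain f s := by
  intro t
  induction t with
  | zero =>
    intro m b h1 h2 _
    have hm : b = m + 1 := by omega
    refine ⟨1, fun j => m + j, le_refl 1, le_refl 1, rfl, by show m + 1 = b; omega, ?_⟩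
    intro j hj
    have : j = 0 := by omega
    subst this
    exact ⟨by show m + 0 < m + (0+1); omega,
      0, by show m + (0+1) - (m + 0) = 2^0; norm_num, one_dvd _⟩
  | succ t ih =>
    intro m b h1 h2 hd
    have hdt : 2^t ∣ m := dvd_trans (pow_dvd_pow 2 (Nat.le_succ t)) hd
    have hps : (2:ℕ)^(t+1) = 2^t + 2^t := by rw [pow_succ]; omega
    by_cases hc : b ≤ m + 2^t
    · obtain ⟨s, f, hs1, hs2, h0, hsm, hch⟩ := ih m b h1 hc hdt
      exact ⟨s, f, hs1, by omega, h0, hsm, hch⟩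
    · push_neg at hc
      have hpos : 0 < (2:ℕ)^t := pow_pos (by norm_num) t
      set c := m + 2^t with hcdef
      have hcb : c < b := hc
      have hbc : b ≤ c + 2^t := by omega
      have hdc : 2^t ∣ c := dvd_add hdt dvd_rfl
      obtain ⟨s, f, hs1, hs2, h0, hsm, hch⟩ := ih c b hcb hbc hdc
      have hstep : IsDyadicChain (fun j => m + j * 2^t) 1 := by
        apply single_step
        exact hdc
      obtain ⟨h, hh0, hhs, hhch⟩ := chain_concat hstep hch (by simpa using h0.symm)
      refine ⟨1 + s, h, by omega, by omega, by simpa using hh0, by rw [hhs, hsm], hhch⟩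

lemma chain_toFin {s : ℕ} {f : ℕ → ℕ} {a b : ℕ} (h0 : f 0 = a) (hs : f s = b)
    (hch : IsDyadicChain f s) :
    ∃ k : Fin (s+1) → ℕ, StrictMono k ∧ k 0 = a ∧ k (Fin.last s) = b ∧
      ∀ j : Fin s, ∃ e : ℕ, k j.succ - k j.castSucc = 2^e ∧ 2^e ∣ k j.succ := by
  refine ⟨fun j => f j.val, ?_, by simpa using h0, by simpa using hs, ?_⟩
  · rw [Fin.strictMono_iff_lt_succ]
    intro i
    simpa using (hch i.val i.isLt).1
  · intro j
    obtain ⟨-, e, he, hd⟩ := hch j.val j.isLt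
    exact ⟨e, by simpa using he, by simpa using hd⟩

/-- Dyadic chain decomposition: for `a < b ≤ a + 2^t` there is a strictly increasing chain
`a = k 0 < k 1 < ⋯ < k s = b` with `1 ≤ s ≤ 2t + 1` such that each consecutive difference
is a power of two dividing the larger endpoint. -/
theorem dyadic_chain_decomposition
    (t a b : ℕ) (hab : a < b) (hb : b ≤ a + 2 ^ t) :
    ∃ s : ℕ, 1 ≤ s ∧ s ≤ 2 * t + 1 ∧
      ∃ k : Fin (s + 1) → ℕ,
        StrictMono k ∧ k 0 = a ∧ k (Fin.last s) = b ∧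
          ∀ j : Fin s, ∃ e : ℕ,
            k j.succ - k j.castSucc = 2 ^ e ∧ 2 ^ e ∣ k j.succ := by
  by_cases hd1 : b = a + 1
  · subst hd1
    have hch : IsDyadicChain (fun j => a + j) 1 := by
      intro j hj
      have : j = 0 := by omega
      subst this
      exact ⟨by show a + 0 < a + (0+1); omega,
        0, by show a + (0+1) - (a + 0) = 2^0; norm_num, one_dvd _⟩
    obtain ⟨k, hk1, hk2, hk3, hk4⟩ :=
      chain_toFin (f := fun j => a + j) (a := a) (b := a + 1) (s := 1) rfl rfl hch
    exact ⟨1, le_rfl, by omega, k, hk1, hk2, hk3, hk4⟩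
  · have hd2 : a + 2 ≤ b := by omega
    set d := b - a with hddef
    have hdge : 2 ≤ d := by omega
    set v := Nat.log 2 (d - 1) with hvdef
    have hv1 : 2^v ≤ d - 1 := Nat.pow_log_le_self 2 (by omega)
    have hv2 : d - 1 < 2^(v+1) := Nat.lt_pow_succ_log_self (by norm_num) (d - 1)
    have hvt : v + 1 ≤ t := by
      have : d - 1 < 2^t := by omega
      have := Nat.log_lt_of_lt_pow (by omega : d - 1 ≠ 0) this
      omega
    have hvpos : 0 < (2:ℕ)^v := pow_pos (by norm_num) v
    set m := 2^v * ((b-1)/2^v) with hmdef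
    have hdvd : 2^v ∣ m := dvd_mul_right _ _
    have hdm : 2^v * ((b-1)/2^v) + (b-1) % 2^v = b - 1 := Nat.div_add_mod (b-1) (2^v)
    have hmod : (b-1) % 2^v < 2^v := Nat.mod_lt _ hvpos
    have ham : a < m := by omega
    have hmb : m < b := by omega
    have hma : m ≤ a + 2^(v+1) := by omega
    have hbm : b ≤ m + 2^v := by omega
    obtain ⟨s₁, f, hs11, hs12, hf0, hfs, hfch⟩ := lemA' v a m ham hma hdvd
    obtain ⟨s₂, g, hs21, hs22, hg0, hgs, hgch⟩ := lemB v m b hmb hbm hdvd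
    obtain ⟨h, hh0, hhs, hhch⟩ := chain_concat hfch hgch (by rw [hfs, hg0])
    obtain ⟨k, hk1, hk2, hk3, hk4⟩ := chain_toFin (by rw [hh0, hf0]) (by rw [hhs, hgs]) hhch
    exact ⟨s₁ + s₂, by omega, by omega, k, hk1, hk2, hk3, hk4⟩
end
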